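/- Let J be a junction tree satisfying the running intersection property, let i–j be an edge, and let v be a variable that occurs only in cluster C(i) among all nodes of J. Adding v to cluster C(j) preserves the running intersection property. -/

import Mathlib

/-!
Only the variable `v` changes occurrence, so for any other variable the running intersection
property is inherited from `C`. After the change `v` occurs at most in the clusters of `i` and `j`, and
since `i` and `j` are adjacent in a tree, a path between two such nodes visits no other node.
-/

namespace SimpleGraph

variable {V Var : Type*} {G : SimpleGraph V}

theorem IsAcyclic.eq_or_eq_of_mem_support_of_adj (hG : G.IsAcyclic) {a b k : V}
    (hab : G.Adj a b) {p : G.Walk a b} (hp : p.IsPath) (hk : k ∈ p.support) :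
    k = a ∨ k = b := by
  obtain rfl : p = hab.toWalk :=
    congrArg Subtype.val ((hG.subsingleton_path a b).elim ⟨p, hp⟩ ⟨_, .of_adj hab⟩)
  simpa using hk

theorem IsAcyclic.eq_or_eq_of_mem_support_of_mem_pair (hG : G.IsAcyclic) {i j a b k : V}
    (hij : G.Adj i j) (ha : a = i ∨ a = j) (hb : b = i ∨ b = j) {p : G.Walk a b}
    (hp : p.IsPath) (hk : k ∈ p.support) : k = a ∨ k = b := by
  by_cases hab : a = b
  · subst hab
    obtain rfl := Walk.eq_nil_iff_nil.mpr (Walk.isPath_iff_nil.mp hp)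
    simp_all
  · have hadj : G.Adj a b := by
      rcases ha with rfl | rfl <;> rcases hb with rfl | rfl
      exacts [absurd rfl hab, hij, hij.symm, absurd rfl hab]
    exact hG.eq_or_eq_of_mem_support_of_adj hadj hp hk

def RunningIntersection (G : SimpleGraph V) (C : V → Set Var) : Prop :=
  ∀ (a b k : V) (p : G.Walk a b), p.IsPath → k ∈ p.support → C a ∩ C b ⊆ C k

end SimpleGraph

open SimpleGraph

section AddToCluster

variable {V Var : Type*} [DecidableEq V]

def addToCluster (C : V → Set Var) (j : V) (v : Var) (k : V) : Set Var :=
  if k = j then C j ∪ {v} else C k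

theorem mem_addToCluster_iff {C : V → Set Var} {j k : V} {v x : Var} :
    x ∈ addToCluster C j v k ↔ x ∈ C k ∨ (k = j ∧ x = v) := by
  unfold addToCluster
  split_ifs with h <;> simp [h, or_comm]

theorem RunningIntersection.addToCluster {G : SimpleGraph V} {C : V → Set Var}
    (hG : G.IsAcyclic) (hC : RunningIntersection G C) {i j : V} (hij : G.Adj i j) {v : Var}
    (hv : ∀ k, v ∈ C k → k = i) : RunningIntersection G (addToCluster C j v) := by
  intro a b k p hp hk x ⟨hxa, hxb⟩
  rw [mem_addToCluster_iff] at hxa hxb ⊢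
  by_cases hxv : x = v
  · subst hxv
    have hpair : ∀ c, x ∈ C c ∨ (c = j ∧ x = x) → c = i ∨ c = j := fun c hc =>
      hc.imp (hv c) And.left
    rcases hG.eq_or_eq_of_mem_support_of_mem_pair hij (hpair a hxa) (hpair b hxb) hp hk
      with rfl | rfl
    exacts [hxa, hxb]
  · simp only [hxv, and_false, or_false] at hxa hxb ⊢
    exact hC a b k p hp hk ⟨hxa, hxb⟩

end AddToCluster

/-- If variable v occurs only in cluster C i among all nodes, and i–j is an edge, then
adding v to C j preserves the running intersection property. -/
theorem stmt_2 {V Var : Type*} [DecidableEq V] (G : SimpleGraph V) (hT : G.IsTree)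
    (C : V → Set Var)
    (RIP : ∀ (a b k : V) (p : G.Walk a b), p.IsPath → k ∈ p.support → C a ∩ C b ⊆ C k)
    (i j : V) (hij : G.Adj i j)
    (v : Var) (hv : ∀ k : V, v ∈ C k → k = i) :
    ∀ (a b k : V) (p : G.Walk a b), p.IsPath → k ∈ p.support →
      (if a = j then C j ∪ {v} else C a) ∩ (if b = j then C j ∪ {v} else C b)
        ⊆ (if k = j then C j ∪ {v} else C k) :=
  RunningIntersection.addToCluster hT.isAcyclic RIP hij hv
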